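/- For λ(r) = sinh(r) and g(r) = λ(r)^{-(n-1)} ∫₀^r λ(t)^{n-1} dt with n ≥ 2, the function g is concave on (0,∞), i.e., g''(r) ≤ 0 for all r > 0. -/

import Mathlib

open Real MeasureTheory intervalIntegral Set Filter Topology

noncomputable def g (n : ℕ) (r : ℝ) : ℝ :=
  ((Real.sinh r) ^ (n - 1))⁻¹ * ∫ t in (0:ℝ)..r, (Real.sinh t) ^ (n - 1)

noncomputable def g' (n : ℕ) (r : ℝ) : ℝ :=
  1 - ((n : ℝ) - 1) * Real.cosh r * g n r / Real.sinh r

lemma hasDerivAt_I (k : ℕ) (x : ℝ) :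
    HasDerivAt (fun r : ℝ => ∫ t in (0:ℝ)..r, Real.sinh t ^ (k+1)) (Real.sinh x ^ (k+1)) x :=
  ((Real.continuous_sinh.pow (k+1)).integral_hasStrictDerivAt 0 x).hasDerivAt

lemma hasDerivAt_g (k : ℕ) (x : ℝ) (hx : 0 < x) :
    HasDerivAt (g (k+2)) (g' (k+2) x) x := by
  have hs : Real.sinh x ≠ 0 := ne_of_gt (Real.sinh_pos_iff.mpr hx)
  have hpow : HasDerivAt (fun r => Real.sinh r ^ (k+1))
      (((k:ℝ)+1) * Real.sinh x ^ k * Real.cosh x) x := by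
    have := (Real.hasDerivAt_sinh x).fun_pow (k+1)
    simpa using this
  have hmul := (hpow.fun_inv (pow_ne_zero _ hs)).fun_mul (hasDerivAt_I k x)
  have hg : g (k+2) = fun r : ℝ =>
      (Real.sinh r ^ (k+1))⁻¹ * ∫ t in (0:ℝ)..r, Real.sinh t ^ (k+1) := rfl
  rw [hg]
  refine hmul.congr_deriv ?_
  simp only [g', g, hg]
  push_cast
  field_simp
  ring

lemma key (k : ℕ) (r : ℝ) (hr : 0 ≤ r) :
    (∫ t in (0:ℝ)..r, Real.sinh t ^ (k+1)) * (1 + ((k:ℝ)+1) * Real.cosh r ^ 2)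
      ≤ Real.sinh r ^ (k+2) * Real.cosh r := by
  set F : ℝ → ℝ := fun x => Real.sinh x ^ (k+2) * Real.cosh x /
      (1 + ((k:ℝ)+1) * Real.cosh x ^ 2) - ∫ t in (0:ℝ)..x, Real.sinh t ^ (k+1) with hF
  have hdpos : ∀ x : ℝ, (0:ℝ) < 1 + ((k:ℝ)+1) * Real.cosh x ^ 2 := fun x => by positivity
  have hder : ∀ x : ℝ, HasDerivAt F
      (((((k:ℝ)+2) * Real.sinh x ^ (k+1) * Real.cosh x * Real.cosh x
          + Real.sinh x ^ (k+2) * Real.sinh x) * (1 + ((k:ℝ)+1) * Real.cosh x ^ 2)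
        - Real.sinh x ^ (k+2) * Real.cosh x * (((k:ℝ)+1) * (2 * Real.cosh x * Real.sinh x)))
        / (1 + ((k:ℝ)+1) * Real.cosh x ^ 2) ^ 2 - Real.sinh x ^ (k+1)) x := by
    intro x
    have h1 : HasDerivAt (fun x => Real.sinh x ^ (k+2) * Real.cosh x)
        (((k:ℝ)+2) * Real.sinh x ^ (k+1) * Real.cosh x * Real.cosh x
          + Real.sinh x ^ (k+2) * Real.sinh x) x := by
      have := ((Real.hasDerivAt_sinh x).fun_pow (k+2)).fun_mul (Real.hasDerivAt_cosh x)
      simpa using this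
    have h2 : HasDerivAt (fun x => 1 + ((k:ℝ)+1) * Real.cosh x ^ 2)
        (((k:ℝ)+1) * (2 * Real.cosh x * Real.sinh x)) x := by
      have := (((Real.hasDerivAt_cosh x).pow 2).const_mul ((k:ℝ)+1)).const_add 1
      simpa [mul_comm, mul_assoc, mul_left_comm] using this
    exact (h1.div h2 (hdpos x).ne').sub (hasDerivAt_I k x)
  have mono : MonotoneOn F (Set.Ici 0) := by
    apply monotoneOn_of_deriv_nonneg (convex_Ici 0)
      (fun x _ => ((hder x).differentiableAt.continuousAt).continuousWithinAt)
      (fun x _ => (hder x).differentiableAt.differentiableWithinAt)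
    intro x hx
    rw [interior_Ici] at hx
    rw [(hder x).deriv]
    have hs : 0 ≤ Real.sinh x := (Real.sinh_pos_iff.mpr hx).le
    rw [sub_nonneg, le_div_iff₀ (by positivity)]
    have hid : (((k:ℝ)+2) * Real.sinh x ^ (k+1) * Real.cosh x * Real.cosh x
          + Real.sinh x ^ (k+2) * Real.sinh x) * (1 + ((k:ℝ)+1) * Real.cosh x ^ 2)
        - Real.sinh x ^ (k+2) * Real.cosh x * (((k:ℝ)+1) * (2 * Real.cosh x * Real.sinh x))
        = Real.sinh x ^ (k+1) * (1 + ((k:ℝ)+1) * Real.cosh x ^ 2) ^ 2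
          + 2 * Real.sinh x ^ (k+3) := by
      linear_combination (Real.sinh x ^ (k+1) * (((k:ℝ)+1) * Real.cosh x ^ 2 + 1))
        * (Real.cosh_sq x)
    have h3 : 0 ≤ Real.sinh x ^ (k+3) := pow_nonneg hs _
    linarith
  have h0 : F 0 = 0 := by simp [hF]
  have hFr : 0 ≤ F r := h0 ▸ mono (le_refl (0:ℝ)) hr hr
  have := sub_nonneg.mp hFr
  rwa [le_div_iff₀ (hdpos r)] at this

theorem stmt4 (n : ℕ) (hn : 2 ≤ n) (r : ℝ) (hr : 0 < r) :
    deriv (deriv (g n)) r ≤ 0 := by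
  obtain ⟨k, rfl⟩ : ∃ k, n = k + 2 := ⟨n - 2, by omega⟩
  have hs : 0 < Real.sinh r := Real.sinh_pos_iff.mpr hr
  have hev : deriv (g (k+2)) =ᶠ[𝓝 r] g' (k+2) := by
    filter_upwards [eventually_gt_nhds hr] with x hx
    exact (hasDerivAt_g k x hx).deriv
  rw [hev.deriv_eq]
  set M : ℝ := ((k:ℕ):ℝ) + 2 - 1 with hM
  have hfe : g' (k+2) = fun x => 1 - M * Real.cosh x * g (k+2) x / Real.sinh x := by
    funext x
    simp only [g', hM]
    push_cast
    ring
  have hG : HasDerivAt (g (k+2))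
      (1 - M * Real.cosh r * g (k+2) r / Real.sinh r) r := by
    have := hasDerivAt_g k r hr
    rwa [show g' (k+2) r = 1 - M * Real.cosh r * g (k+2) r / Real.sinh r from
      congrFun hfe r] at this
  have h1 : HasDerivAt (fun x => M * Real.cosh x * g (k+2) x)
      ((M * Real.sinh r) * g (k+2) r
        + (M * Real.cosh r) * (1 - M * Real.cosh r * g (k+2) r / Real.sinh r)) r :=
    ((Real.hasDerivAt_cosh r).const_mul M).mul hG
  have h2 := (h1.fun_div (Real.hasDerivAt_sinh r) hs.ne').const_sub 1
  rw [hfe, h2.deriv]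
  -- reduce to the key inequality
  set s := Real.sinh r
  set c := Real.cosh r
  set I := ∫ t in (0:ℝ)..r, Real.sinh t ^ (k+1) with hI
  have hGe : g (k+2) r = (s ^ (k+1))⁻¹ * I := rfl
  have hkey : I * (1 + ((k:ℝ)+1) * c ^ 2) ≤ s ^ (k+2) * c := key k r hr.le
  have hc2 : c ^ 2 = s ^ 2 + 1 := Real.cosh_sq r
  have hMk : M = (k:ℝ) + 1 := by rw [hM]; ring
  have hsp : (0:ℝ) < s ^ (k+1) := pow_pos hs _
  rw [neg_nonpos]
  apply div_nonneg _ (sq_nonneg s)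
  rw [hGe, hMk]
  set G : ℝ := (s ^ (k+1))⁻¹ * I with hGdef
  have hGs : G * s ^ (k+1) = I := by
    rw [hGdef]; field_simp
  have hGle : G * (1 + ((k:ℝ)+1) * c ^ 2) ≤ s * c := by
    have h' : G * (1 + ((k:ℝ)+1) * c ^ 2) * s ^ (k+1) ≤ (s * c) * s ^ (k+1) := by
      calc G * (1 + ((k:ℝ)+1) * c ^ 2) * s ^ (k+1)
          = I * (1 + ((k:ℝ)+1) * c ^ 2) := by rw [← hGs]; ring
        _ ≤ s ^ (k+2) * c := hkey
        _ = (s * c) * s ^ (k+1) := by ring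
    exact le_of_mul_le_mul_right h' hsp
  have hG's : (1 - ((k:ℝ)+1) * c * G / s) * s = s - ((k:ℝ)+1) * c * G := by
    field_simp
  have hNval : (((((k:ℝ)+1) * s) * G + (((k:ℝ)+1) * c) * (1 - ((k:ℝ)+1) * c * G / s)) * s
      - ((k:ℝ)+1) * c * G * c)
      = ((k:ℝ)+1) * (s * c - G * (1 + ((k:ℝ)+1) * c ^ 2)) := by
    linear_combination (((k:ℝ)+1) * c) * hG's + (-(((k:ℝ)+1) * G)) * hc2
  rw [hNval]
  exact mul_nonneg (by positivity) (sub_nonneg.mpr hGle)
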